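/- In the 'FORCER' gadget with 'fast' states q_{1,0}, …, q_{2n+3,0} connected by a-transitions (δ(q_{k,0}, a) = q_{k+1,0}) and 'delay' states reached by b-transitions (δ(q_{k,0}, b) = q_{k+1,2}, with δ(q_{k,2}, a) = δ(q_{k,2}, b) building a detour of extra length 2 before rejoining the fast track), the following holds: if q_{1,0} is active and the entire gadget must be deactivated (all activity pushed out through q_{2n+3,0}'s exit) within 2n + 3 steps, then the applied word must begin with a^{2n+2}; any occurrence of b among the first 2n + 2 letters makes deactivation within 2n + 3 steps impossible. -/

import Mathlib

/-! Reading `b` at a fast state `q_{k,0}` leads to `q_{k+1,2}`, which is two letters farther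
from the exit than `q_{k+1,0}`, while a single letter brings any state at most one letter closer.
From `q_{1,0}` the exit is `2n + 3` letters away, so a word of length `2n + 3` leaving the
gadget has no slack for a detour and must read `a` at every fast state it passes before the
last one. -/

/-- The binary alphabet `{a, b}`. -/
inductive Letter | a | b
deriving DecidableEq, Inhabited

open Letter

/-- States of the `FORCER` gadget: `Sum.inl (k, j)` is the state `q_{k,j}`
(fast states are `q_{k,0}`, `1 ≤ k ≤ 2n+3`; detour states have `j ∈ {1, 2}`),
and `Sum.inr ()` is the exit (outside the gadget). -/
def ForcerState : Type := (ℕ × ℕ) ⊕ Unit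

/-- Transitions of the `FORCER` gadget: `δ(q_{k,0}, a) = q_{k+1,0}`,
`δ(q_{k,0}, b) = q_{k+1,2}` for `k < 2n+3`, the fast state `q_{2n+3,0}` exits,
and each detour state `q_{k,2}` needs two further steps
(`q_{k,2} → q_{k,1} → q_{k,0}`, under both letters) to rejoin the fast track. -/
def forcerδ (n : ℕ) : ForcerState → Letter → ForcerState
  | Sum.inl (k, 0), a => if k < 2 * n + 3 then Sum.inl (k + 1, 0) else Sum.inr ()
  | Sum.inl (k, 0), b => if k < 2 * n + 3 then Sum.inl (k + 1, 2) else Sum.inr ()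
  | Sum.inl (k, 2), _ => Sum.inl (k, 1)
  | Sum.inl (k, 1), _ => Sum.inl (k, 0)
  | Sum.inl p, _ => Sum.inl p
  | Sum.inr u, _ => Sum.inr u

/-- Extension of the transition function to words. -/
def run {Q X : Type*} (δ : Q → X → Q) (q : Q) (w : List X) : Q := w.foldl δ q


open Sum

section
variable {Q X : Type*} (δ : Q → X → Q)

theorem run_cons (q : Q) (x : X) (w : List X) : run δ q (x :: w) = run δ (δ q x) w := rfl

theorem le_run_add_length {φ : Q → ℕ} (hφ : ∀ q x, φ q ≤ φ (δ q x) + 1) (q : Q) (w : List X) :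
    φ q ≤ φ (run δ q w) + w.length := by
  induction w generalizing q with
  | nil => simp [run]
  | cons x w ih =>
    rw [run_cons, List.length_cons]
    have := ih (δ q x)
    have := hφ q x
    omega

end

section
variable (n k : ℕ)

theorem forcerδ_inl_zero_a :
    forcerδ n (inl (k, 0)) a = if k < 2 * n + 3 then inl (k + 1, 0) else inr () := rfl

theorem forcerδ_inl_zero_b :
    forcerδ n (inl (k, 0)) b = if k < 2 * n + 3 then inl (k + 1, 2) else inr () := rfl

theorem forcerδ_inl_one (x : Letter) : forcerδ n (inl (k, 1)) x = inl (k, 0) := by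
  cases x <;> rfl

theorem forcerδ_inl_two (x : Letter) : forcerδ n (inl (k, 2)) x = inl (k, 1) := by
  cases x <;> rfl

theorem forcerδ_inl_add_three (j : ℕ) (x : Letter) :
    forcerδ n (inl (k, j + 3)) x = inl (k, j + 3) := by
  cases x <;> rfl

theorem forcerδ_inr (u : Unit) (x : Letter) : forcerδ n (inr u) x = inr u := by
  cases x <;> rfl

end

/-- The number of letters needed to reach the exit from `q_{k,j}` when `k ≤ 2n + 3` and `j ≤ 2`;
elsewhere only a lower bound. -/
def forcerDist (n : ℕ) : ForcerState → ℕ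
  | inl (k, j) => 2 * n + 4 - k + j
  | inr _ => 0

theorem forcerDist_le_forcerδ_add_one (n : ℕ) :
    ∀ q x, forcerDist n q ≤ forcerDist n (forcerδ n q x) + 1
  | inl (k, 0), a => by rw [forcerδ_inl_zero_a]; split_ifs <;> simp only [forcerDist] <;> omega
  | inl (k, 0), b => by rw [forcerδ_inl_zero_b]; split_ifs <;> simp only [forcerDist] <;> omega
  | inl (k, 1), x => by rw [forcerδ_inl_one]; simp only [forcerDist]; omega
  | inl (k, 2), x => by rw [forcerδ_inl_two]; simp only [forcerDist]; omega
  | inl (k, j + 3), x => by rw [forcerδ_inl_add_three]; omega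
  | inr u, x => by rw [forcerδ_inr]; omega

theorem forcerDist_le_length_of_run_eq_inr {n : ℕ} {q : ForcerState} {w : List Letter}
    (hout : run (forcerδ n) q w = inr ()) : forcerDist n q ≤ w.length := by
  simpa [hout, forcerDist] using le_run_add_length _ (forcerDist_le_forcerδ_add_one n) q w

theorem getElem!_eq_a_of_run_forcerδ_eq_inr {n k : ℕ} {w : List Letter}
    (hout : run (forcerδ n) (inl (k, 0)) w = inr ())
    (hlen : w.length ≤ forcerDist n (inl (k, 0)) + 1) :
    ∀ i < 2 * n + 3 - k, w[i]! = a := by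
  induction w generalizing k with
  | nil => intro i _; rfl
  | cons x w ih =>
    intro i hi
    have hk : k < 2 * n + 3 := by omega
    simp only [forcerDist, List.length_cons] at hlen
    -- `rw [run_cons]` would fail: `inl (k, 0)` has type `ℕ × ℕ ⊕ Unit`, not `ForcerState`.
    replace hout : run (forcerδ n) (forcerδ n (inl (k, 0)) x) w = inr () := hout
    cases x with
    | b =>
      rw [forcerδ_inl_zero_b, if_pos hk] at hout
      have := forcerDist_le_length_of_run_eq_inr hout
      simp only [forcerDist] at this
      omega
    | a =>
      rw [forcerδ_inl_zero_a, if_pos hk] at hout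
      rcases i with _ | i
      · rfl
      · simpa using ih hout (by simp only [forcerDist]; omega) i (by omega)

/-- If `q_{1,0}` is active and its activity must leave the `FORCER` gadget
through the exit within `2n + 3` steps, then the applied word begins with
`a^{2n+2}`: any occurrence of `b` among the first `2n + 2` letters makes this
impossible. -/
theorem forcer_forces (n : ℕ) (w : List Letter) (hlen : w.length = 2 * n + 3)
    (hout : run (forcerδ n) (Sum.inl (1, 0)) w = Sum.inr ()) :
    ∀ i < 2 * n + 2, w[i]! = a :=
  getElem!_eq_a_of_run_forcerδ_eq_inr hout (by simp only [forcerDist]; omega)
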